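/- (Positivity of the cost function on the half-line.) Let b ≥ 1, α ∈ ℝ, and let f ∈ C²([0,∞);ℝ) satisfy −f''(t) + (t+α)²f(t) = (1/b)(1 − f(t)²)f(t) for all t ≥ 0. Assume that f(t) → 0 as t → ∞, that t ↦ (t+α)f(t)² is integrable on (0,∞), and that ∫₀^∞ (t+α)f(t)² dt = 0. Then the cost function K(t) := f(t)² + 2∫₀^t (η+α)f(η)² dη satisfies K(t) ≥ 0 for every t ≥ 0. -/

import Mathlib

open MeasureTheory Real Set Filter
open scoped Topology

/-!
The derivative of `K` is `K' = 2 f f' + 2 (t + α) f²`, and the equation gives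
`K'' = 2 (f' + (t + α) f)² + 2 (1 - 1/b) f² + (2/b) f⁴ ≥ 0`, so `K` is convex on `[0, ∞)`.
By the optimality condition and `f → 0`, `K(t) → 0` as `t → ∞`; a convex function with a finite
limit at infinity is nonincreasing, hence bounded below by that limit.
-/

noncomputable section

def costK (α : ℝ) (f : ℝ → ℝ) (t : ℝ) : ℝ :=
  (f t) ^ 2 + 2 * ∫ η in Ioo (0 : ℝ) t, (η + α) * (f η) ^ 2

theorem ConvexOn.antitoneOn_Ici_of_tendsto {K : ℝ → ℝ} {a L : ℝ} (hK : ConvexOn ℝ (Ici a) K)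
    (hlim : Tendsto K atTop (𝓝 L)) : AntitoneOn K (Ici a) := by
  intro t ht u hu htu
  rcases htu.eq_or_lt with rfl | htu
  · exact le_rfl
  have hslope_lim : Tendsto (fun v => (K v - K u) / (v - u)) atTop (𝓝 0) :=
    (hlim.sub_const (K u)).div_atTop (tendsto_atTop_add_const_right _ (-u) tendsto_id)
  have hslope : (K u - K t) / (u - t) ≤ 0 :=
    ge_of_tendsto hslope_lim <| (eventually_gt_atTop u).mono fun v huv =>
      hK.slope_mono_adjacent ht (mem_Ici.2 (hu.out.trans huv.le)) htu huv
  have := (div_le_iff₀ (sub_pos.2 htu)).1 hslope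
  linarith

theorem ConvexOn.le_of_tendsto_atTop {K : ℝ → ℝ} {a L t : ℝ} (hK : ConvexOn ℝ (Ici a) K)
    (hlim : Tendsto K atTop (𝓝 L)) (ht : a ≤ t) : L ≤ K t :=
  le_of_tendsto hlim <| (eventually_ge_atTop t).mono fun _ htu =>
    hK.antitoneOn_Ici_of_tendsto hlim ht (mem_Ici.2 (ht.trans htu)) htu

theorem gl_cost_second_deriv_nonneg {b x y y' y'' : ℝ} (hb : 1 ≤ b)
    (hode : -y'' + x ^ 2 * y = 1 / b * (1 - y ^ 2) * y) :
    0 ≤ 2 * y' ^ 2 + 2 * y * y'' + 2 * y ^ 2 + 4 * x * y * y' := by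
  have hsplit : 2 * y' ^ 2 + 2 * y * y'' + 2 * y ^ 2 + 4 * x * y * y' =
      2 * (y' + x * y) ^ 2 + 2 * (1 - 1 / b) * y ^ 2 + 2 * (1 / b) * (y ^ 2) ^ 2 := by
    rw [show y'' = x ^ 2 * y - 1 / b * (1 - y ^ 2) * y by linarith]
    ring
  have hb' : 0 ≤ 1 - 1 / b := sub_nonneg.2 <| (div_le_one (by positivity)).2 hb
  rw [hsplit]
  positivity

section

variable {α : ℝ} {f : ℝ → ℝ}

theorem eqOn_costK :
    EqOn (costK α f) (fun t => f t ^ 2 + 2 * ∫ η in (0 : ℝ)..t, (η + α) * f η ^ 2) (Ici 0) :=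
  fun t ht => by
    simp only [costK, intervalIntegral.integral_of_le ht.out, integral_Ioc_eq_integral_Ioo]

theorem hasDerivAt_sq_add_two_mul_integral {g : ℝ → ℝ} (hf : Differentiable ℝ f)
    (hg : Continuous g) (t : ℝ) :
    HasDerivAt (fun t => f t ^ 2 + 2 * ∫ η in (0 : ℝ)..t, g η)
      (2 * (f t * deriv f t) + 2 * g t) t := by
  have hsq : HasDerivAt (fun t => f t ^ 2) (2 * (f t * deriv f t)) t :=
    ((hf t).hasDerivAt.fun_pow 2).congr_deriv (by norm_num [mul_assoc])
  exact hsq.add ((hg.integral_hasStrictDerivAt 0 t).hasDerivAt.const_mul 2)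

theorem hasDerivAt_costK_deriv (hf : ContDiff ℝ 2 f) (t : ℝ) :
    HasDerivAt (fun t => 2 * (f t * deriv f t) + 2 * ((t + α) * f t ^ 2))
      (2 * deriv f t ^ 2 + 2 * f t * deriv (deriv f) t + 2 * f t ^ 2
        + 4 * (t + α) * f t * deriv f t) t := by
  have hf' : HasDerivAt f (deriv f t) t :=
    (hf.differentiable (by norm_num) t).hasDerivAt
  have hf'' : HasDerivAt (deriv f) (deriv (deriv f) t) t :=
    ((hf.iterate_deriv' 1 1).differentiable (by norm_num) t).hasDerivAt
  have hweight : HasDerivAt (fun t => (t + α) * f t ^ 2)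
      (f t ^ 2 + (t + α) * (2 * f t * deriv f t)) t :=
    (((hasDerivAt_id' t).add_const α).fun_mul (hf'.fun_pow 2)).congr_deriv (by norm_num)
  exact (((hf'.fun_mul hf'').const_mul 2).add (hweight.const_mul 2)).congr_deriv (by ring)

theorem convexOn_costK {b : ℝ} (hb : 1 ≤ b) (hf : ContDiff ℝ 2 f)
    (hode : ∀ t : ℝ, 0 ≤ t →
      -deriv (deriv f) t + (t + α) ^ 2 * f t = 1 / b * (1 - (f t) ^ 2) * f t) :
    ConvexOn ℝ (Ici 0) (costK α f) := by
  have hfd : Differentiable ℝ f := hf.differentiable (by norm_num)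
  have hweight : Continuous fun η => (η + α) * f η ^ 2 := by
    have := hfd.continuous
    fun_prop
  have hK' := hasDerivAt_sq_add_two_mul_integral hfd hweight
  refine (convexOn_of_hasDerivWithinAt2_nonneg (convex_Ici 0)
    (fun t _ => (hK' t).continuousAt.continuousWithinAt) (fun t _ => (hK' t).hasDerivWithinAt)
    (fun t _ => (hasDerivAt_costK_deriv hf t).hasDerivWithinAt) fun t ht => ?_).congr
    eqOn_costK.symm
  rw [interior_Ici] at ht
  exact gl_cost_second_deriv_nonneg hb (hode t ht.out.le)

theorem tendsto_costK (hlim : Tendsto f atTop (𝓝 0))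
    (hint : IntegrableOn (fun t => (t + α) * (f t) ^ 2) (Ioi 0))
    (hopt : (∫ t in Ioi (0 : ℝ), (t + α) * (f t) ^ 2) = 0) :
    Tendsto (costK α f) atTop (𝓝 0) := by
  have hI := intervalIntegral_tendsto_integral_Ioi 0 hint tendsto_id
  rw [hopt] at hI
  refine Tendsto.congr' ?_ (by simpa using (hlim.pow 2).add (hI.const_mul 2))
  exact (eventually_ge_atTop 0).mono fun t ht => (eqOn_costK ht).symm

end

/-- **Positivity of the cost function on the half-line.**  For `b ≥ 1` and a `C²`
solution of the 1D GL equation on `[0,∞)` vanishing at infinity and satisfying the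
optimality condition, the cost function is nonnegative. -/
theorem cost_function_nonneg
    (b α : ℝ) (hb : 1 ≤ b)
    (f : ℝ → ℝ) (hf : ContDiff ℝ 2 f)
    (hode : ∀ t : ℝ, 0 ≤ t →
      -deriv (deriv f) t + (t + α) ^ 2 * f t = 1 / b * (1 - (f t) ^ 2) * f t)
    (hlim : Tendsto f atTop (𝓝 0))
    (hint : IntegrableOn (fun t => (t + α) * (f t) ^ 2) (Ioi 0))
    (hopt : (∫ t in Ioi (0 : ℝ), (t + α) * (f t) ^ 2) = 0) :
    ∀ t : ℝ, 0 ≤ t → 0 ≤ costK α f t := fun _ ht =>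
  (convexOn_costK hb hf hode).le_of_tendsto_atTop (tendsto_costK hlim hint hopt) ht
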